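/- For any invertible matrix $g \in \mathrm{GL}(d,\mathbb{C})$, HPD matrices $p, q$, and Hermitian matrix $h$: $g^* \mathrm{Log}_p(q)\, g = \mathrm{Log}_{g^* p g}(g^* q g)$ and $g^* \mathrm{Exp}_p(h)\, g = \mathrm{Exp}_{g^* p g}(g^* h g)$. -/

import Mathlib

set_option maxHeartbeats 800000

open Matrix
open scoped ComplexOrder Classical

variable {d : ℕ}

/-- Frobenius norm of a complex matrix. -/
noncomputable def frob (A : Matrix (Fin d) (Fin d) ℂ) : ℝ :=
  Real.sqrt (∑ i, ∑ j, ‖A i j‖ ^ 2)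

/-- The unique positive semidefinite square root (junk value `0` if not PSD). -/

noncomputable def msqrt (A : Matrix (Fin d) (Fin d) ℂ) : Matrix (Fin d) (Fin d) ℂ :=
  if h : A.PosSemidef then
    (h.1.eigenvectorUnitary : Matrix (Fin d) (Fin d) ℂ) *
      Matrix.diagonal ((↑) ∘ Real.sqrt ∘ h.1.eigenvalues) *
      star (h.1.eigenvectorUnitary : Matrix (Fin d) (Fin d) ℂ)
  else 0

/-- Principal matrix logarithm of a Hermitian (positive definite) matrix, via the
spectral decomposition (junk value `0` otherwise). -/

noncomputable def mLog (A : Matrix (Fin d) (Fin d) ℂ) : Matrix (Fin d) (Fin d) ℂ :=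
  if h : A.IsHermitian then
    (h.eigenvectorUnitary : Matrix (Fin d) (Fin d) ℂ) *
      Matrix.diagonal (fun i => (Real.log (h.eigenvalues i) : ℂ)) *
      star (h.eigenvectorUnitary : Matrix (Fin d) (Fin d) ℂ)
  else 0

/-- Matrix exponential. -/
noncomputable def mExp (A : Matrix (Fin d) (Fin d) ℂ) : Matrix (Fin d) (Fin d) ℂ :=
  NormedSpace.exp A

/-- Real power of an HPD matrix: `X^t = Exp(t Log X)`. -/
noncomputable def mpow (A : Matrix (Fin d) (Fin d) ℂ) (t : ℝ) : Matrix (Fin d) (Fin d) ℂ :=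
  mExp ((t : ℂ) • mLog A)

/-- Affine-invariant Riemannian distance on HPD matrices. -/
noncomputable def rdist (p q : Matrix (Fin d) (Fin d) ℂ) : ℝ :=
  frob (mLog ((msqrt p)⁻¹ * q * (msqrt p)⁻¹))

/-- Geodesic midpoint of two HPD matrices. -/
noncomputable def mid (p q : Matrix (Fin d) (Fin d) ℂ) : Matrix (Fin d) (Fin d) ℂ :=
  msqrt p * msqrt ((msqrt p)⁻¹ * q * (msqrt p)⁻¹) * msqrt p

/-- Riemannian exponential map at `p`. -/
noncomputable def rExp (p h : Matrix (Fin d) (Fin d) ℂ) : Matrix (Fin d) (Fin d) ℂ :=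
  msqrt p * mExp ((msqrt p)⁻¹ * h * (msqrt p)⁻¹) * msqrt p

/-- Riemannian logarithm map at `p`. -/
noncomputable def rLog (p q : Matrix (Fin d) (Fin d) ℂ) : Matrix (Fin d) (Fin d) ℂ :=
  msqrt p * mLog ((msqrt p)⁻¹ * q * (msqrt p)⁻¹) * msqrt p


/-!
Put `s = p^{1/2}` and `s' = (gᴴ p g)^{1/2}`. The matrix `u = s'⁻¹ gᴴ s` is unitary, since
`u uᴴ = s'⁻¹ (gᴴ p g) s'⁻¹ = 1`, and `gᴴ s = s' u`. Hence the congruence by `g` turns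
`s⁻¹ X s⁻¹` into `u (s⁻¹ X s⁻¹) uᴴ` and `s Y s` into `s' (u Y uᴴ) s'`, so both maps reduce to
the invariance of the matrix exponential and logarithm under unitary conjugation.
-/

local notation "𝕄" => Matrix (Fin d) (Fin d) ℂ

lemma cfc_unitary_conj {A : Type*} [Ring A] [StarRing A] [TopologicalSpace A] [IsTopologicalRing A]
    [Algebra ℝ A] [ContinuousFunctionalCalculus ℝ A IsSelfAdjoint] [ContinuousMap.UniqueHom ℝ A]
    {u : A} (hu : u ∈ unitary A) (f : ℝ → ℝ) {a : A} (ha : IsSelfAdjoint a)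
    (hf : ContinuousOn f (spectrum ℝ a) := by cfc_cont_tac) :
    cfc f (u * a * star u) = u * cfc f a * star u :=
  (StarAlgHomClass.map_cfc (Unitary.conjStarAlgAut ℝ A ⟨u, hu⟩) f a hf
    ((continuous_const.mul continuous_id).mul continuous_const) ha (ha.conjugate u)).symm

lemma mExp_unitary_conj {u : 𝕄} (hu : u ∈ unitary 𝕄) (A : 𝕄) :
    mExp (u * A * star u) = u * mExp A * star u := by
  simpa [mExp] using Matrix.exp_units_conj (Unitary.toUnits ⟨u, hu⟩) A

lemma mLog_eq_cfc {A : 𝕄} (hA : A.IsHermitian) : mLog A = cfc Real.log A := by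
  rw [mLog, dif_pos hA, hA.cfc_eq]
  rfl

lemma mLog_unitary_conj {u : 𝕄} (hu : u ∈ unitary 𝕄) {A : 𝕄} (hA : A.IsHermitian) :
    mLog (u * A * star u) = u * mLog A * star u := by
  rw [mLog_eq_cfc hA, mLog_eq_cfc (hA.isSelfAdjoint.conjugate u), cfc_unitary_conj hu Real.log hA
    (hf := (hA.spectrum_real_eq_range_eigenvalues ▸ Set.finite_range _).continuousOn _)]

lemma msqrt_eq_cfc {A : 𝕄} (hA : A.PosSemidef) : msqrt A = cfc Real.sqrt A := by
  rw [msqrt, dif_pos hA, hA.1.cfc_eq]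
  rfl

lemma msqrt_isHermitian {A : 𝕄} (hA : A.PosSemidef) : (msqrt A).IsHermitian := by
  rw [msqrt_eq_cfc hA]
  exact cfc_predicate Real.sqrt A

lemma msqrt_mul_self {A : 𝕄} (hA : A.PosSemidef) : msqrt A * msqrt A = A := by
  rw [msqrt_eq_cfc hA, ← cfc_mul Real.sqrt Real.sqrt A]
  conv_rhs => rw [← cfc_id' ℝ A hA.1]
  refine cfc_congr fun x hx => ?_
  rw [hA.1.spectrum_real_eq_range_eigenvalues] at hx
  obtain ⟨i, rfl⟩ := hx
  exact Real.mul_self_sqrt (hA.eigenvalues_nonneg i)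

lemma isUnit_det_msqrt {A : 𝕄} (hA : A.PosDef) : IsUnit (msqrt A).det := by
  have h : IsUnit ((msqrt A).det * (msqrt A).det) := by
    rw [← det_mul, msqrt_mul_self hA.posSemidef]
    exact (isUnit_iff_isUnit_det A).mp hA.isUnit
  exact isUnit_of_mul_isUnit_left h

lemma Matrix.PosDef.conjTranspose_mul_mul_of_isUnit {n : Type*} [Fintype n] [DecidableEq n]
    {g p : Matrix n n ℂ} (hp : p.PosDef) (hg : IsUnit g) : (gᴴ * p * g).PosDef :=
  hp.conjTranspose_mul_mul_same (mulVec_injective_iff_isUnit.mpr hg)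

lemma msqrt_congr_inv_mul_mem_unitary {g p : 𝕄} (hg : IsUnit g) (hp : p.PosDef) :
    (msqrt (gᴴ * p * g))⁻¹ * gᴴ * msqrt p ∈ unitary 𝕄 := by
  have hp' := hp.conjTranspose_mul_mul_of_isUnit hg
  set s := msqrt p
  set s' := msqrt (gᴴ * p * g)
  have hs : sᴴ = s := (msqrt_isHermitian hp.posSemidef).eq
  have hs' : s'⁻¹ᴴ = s'⁻¹ := (msqrt_isHermitian hp'.posSemidef).inv.eq
  have hmul : (s'⁻¹ * gᴴ * s) * star (s'⁻¹ * gᴴ * s) = 1 := calc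
    _ = s'⁻¹ * (gᴴ * (s * s) * g) * s'⁻¹ := by
      rw [star_eq_conjTranspose, conjTranspose_mul, conjTranspose_mul, hs, hs',
        conjTranspose_conjTranspose]
      noncomm_ring
    _ = s'⁻¹ * (s' * s') * s'⁻¹ := by
      rw [msqrt_mul_self hp.posSemidef, msqrt_mul_self hp'.posSemidef]
    _ = 1 := by
      have h := isUnit_det_msqrt hp'
      rw [← mul_assoc, nonsing_inv_mul _ h, one_mul, mul_nonsing_inv _ h]
  exact Unitary.mem_iff.mpr ⟨mul_eq_one_comm.mp hmul, hmul⟩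

/-- Definitionally, `rLog p = transportTo mLog p` and `rExp p = transportTo mExp p`. -/
noncomputable def transportTo (f : 𝕄 → 𝕄) (p X : 𝕄) : 𝕄 :=
  msqrt p * f ((msqrt p)⁻¹ * X * (msqrt p)⁻¹) * msqrt p

lemma conjTranspose_mul_transportTo_mul {g p : 𝕄} (hg : IsUnit g) (hp : p.PosDef)
    {f : 𝕄 → 𝕄} {X : 𝕄}
    (hf : ∀ u ∈ unitary 𝕄, f (u * ((msqrt p)⁻¹ * X * (msqrt p)⁻¹) * star u) =
      u * f ((msqrt p)⁻¹ * X * (msqrt p)⁻¹) * star u) :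
    gᴴ * transportTo f p X * g = transportTo f (gᴴ * p * g) (gᴴ * X * g) := by
  have hp' := hp.conjTranspose_mul_mul_of_isUnit hg
  set s := msqrt p
  set s' := msqrt (gᴴ * p * g)
  have hs := isUnit_det_msqrt hp
  have hs' := isUnit_det_msqrt hp'
  set u := s'⁻¹ * gᴴ * s with hu
  have hstar : star u = s * g * s'⁻¹ := by
    rw [star_eq_conjTranspose, conjTranspose_mul, conjTranspose_mul, conjTranspose_conjTranspose,
      conjTranspose_nonsing_inv, (msqrt_isHermitian hp.posSemidef).eq,
      (msqrt_isHermitian hp'.posSemidef).eq, ← mul_assoc]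
  have hin : u * (s⁻¹ * X * s⁻¹) * star u = s'⁻¹ * (gᴴ * X * g) * s'⁻¹ := calc
    _ = s'⁻¹ * (gᴴ * ((s * s⁻¹) * X * (s⁻¹ * s)) * g) * s'⁻¹ := by
      rw [hstar, hu]; simp only [mul_assoc]
    _ = _ := by rw [mul_nonsing_inv _ hs, nonsing_inv_mul _ hs, one_mul, mul_one]
  have hout : ∀ Z, s' * (u * Z * star u) * s' = gᴴ * (s * Z * s) * g := fun Z => calc
    _ = (s' * s'⁻¹) * (gᴴ * (s * Z * s) * g) * (s'⁻¹ * s') := by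
      rw [hstar, hu]; simp only [mul_assoc]
    _ = _ := by rw [mul_nonsing_inv _ hs', nonsing_inv_mul _ hs', one_mul, mul_one]
  rw [transportTo, transportTo, ← hin, hf u (msqrt_congr_inv_mul_mem_unitary hg hp), hout]

theorem rLog_rExp_congruence_equivariant_general {d : ℕ} (g p q h : Matrix (Fin d) (Fin d) ℂ)
    (hg : IsUnit g) (hp : p.PosDef) (hq : q.PosDef) :
    gᴴ * rLog p q * g = rLog (gᴴ * p * g) (gᴴ * q * g) ∧
    gᴴ * rExp p h * g = rExp (gᴴ * p * g) (gᴴ * h * g) := by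
  have hq' : ((msqrt p)⁻¹ * q * (msqrt p)⁻¹).IsHermitian := by
    simpa [(msqrt_isHermitian hp.posSemidef).inv.eq] using
      isHermitian_conjTranspose_mul_mul (msqrt p)⁻¹ hq.isHermitian
  exact ⟨conjTranspose_mul_transportTo_mul hg hp fun u hu => mLog_unitary_conj hu hq',
    conjTranspose_mul_transportTo_mul hg hp fun u hu => mExp_unitary_conj hu _⟩

/-- the Riemannian Log and Exp maps are equivariant under congruence
transformation by any invertible matrix `g`. -/
theorem rLog_rExp_congruence_equivariant {d : ℕ} (g p q h : Matrix (Fin d) (Fin d) ℂ)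
    (hg : IsUnit g) (hp : p.PosDef) (hq : q.PosDef) (hh : h.IsHermitian) :
    gᴴ * rLog p q * g = rLog (gᴴ * p * g) (gᴴ * q * g) ∧
    gᴴ * rExp p h * g = rExp (gᴴ * p * g) (gᴴ * h * g) :=
  rLog_rExp_congruence_equivariant_general g p q h hg hp hq
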